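/- arXiv:2604.17777 — 2 statements merged into one kernel-verified Lean document; each statement's English description precedes it below -/
import Mathlib

section
/- There exists an absolute constant C > 0 such that for every n ≥ 3 and every pair of distinct indices i, j ∈ {1, …, n}, there is a word w in the free group F(a, b) on two generators whose evaluation at (a_n, b_n) equals the elementary transvection T_{i,j}, and whose freely reduced length satisfies ℓ(w) ≤ C · n². -/
/-!
Conjugation by `a_n` is a signed cyclic shift of the indices: it carries `I + c E_{i,j}` to
`I + c E_{i+1,j+1}`, picking up the sign `ε_n` when an index wraps from `n` to `1`. Hence every
`T_{i,j}` is a conjugate of `T_{d+1,1}` (or of its inverse) by `a_n^{j-1}`, where `d ≡ i - j`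
mod `n`, and it suffices to write `T_{d+1,1}` with `O(d²)` letters. Starting from
`T_{2,1} = b_n`, split `d = d₁ + d₂` with `d₂ = ⌊d/2⌋`: then
`T_{d+1,1} = [T_{d+1,d₂+1}, T_{d₂+1,1}]` and `T_{d+1,d₂+1} = a_n^{-d₂} T_{d₁+1,1} a_n^{d₂}`,
so the length `L(d)` satisfies `L(d) ≤ 2 L(d₁) + 2 L(d₂) + 4 d₂`, whence
`L(d) ≤ 4d² - 3d`.
-/

open Matrix

/-- The `n × n` integer matrix unit `E_{i,j}`, with 1-based indices `i, j ∈ {1, …, n}`: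
its `(r,s)` entry (0-based) is `1` when `r + 1 = i` and `s + 1 = j`, and `0` otherwise. -/
def matUnit (n i j : ℕ) : Matrix (Fin n) (Fin n) ℤ :=
  Matrix.of fun r s => if r.val + 1 = i ∧ s.val + 1 = j then 1 else 0

/-- The elementary transvection `T_{i,j} = I_n + E_{i,j}` (1-based indices). -/
def Tmat (n i j : ℕ) : Matrix (Fin n) (Fin n) ℤ :=
  1 + matUnit n i j

/-- The sign `ε_n = (-1)^(n-1)`. -/
def eps (n : ℕ) : ℤ := (-1) ^ (n - 1)

/-- `a_n = Σ_{i=1}^{n-1} E_{i,i+1} + ε_n E_{n,1}`. -/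
def aMat (n : ℕ) : Matrix (Fin n) (Fin n) ℤ :=
  (∑ i ∈ Finset.range (n - 1), matUnit n (i + 1) (i + 2)) + eps n • matUnit n n 1

/-- `b_n = I_n + E_{2,1}`. -/
def bMat (n : ℕ) : Matrix (Fin n) (Fin n) ℤ :=
  1 + matUnit n 2 1

open scoped commutatorElement
open FreeGroup Matrix.SpecialLinearGroup

variable {n : ℕ}

lemma matUnit_mul_matUnit_of_ne {i j k l : ℕ} (hjk : j ≠ k) :
    matUnit n i j * matUnit n k l = 0 := by
  ext r s
  simp only [mul_apply, matUnit, of_apply, Matrix.zero_apply]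
  exact Finset.sum_eq_zero fun t _ => by split_ifs <;> omega

lemma matUnit_mul_matUnit {i j l : ℕ} (hj : 1 ≤ j) (hjn : j ≤ n) :
    matUnit n i j * matUnit n j l = matUnit n i l := by
  ext r s
  simp only [mul_apply, matUnit, of_apply]
  rw [Finset.sum_eq_single ⟨j - 1, by omega⟩]
  · simp only [Nat.sub_add_cancel hj, and_true, true_and]
    by_cases hr : r.val + 1 = i <;> by_cases hs : s.val + 1 = l <;> simp [hr, hs]
  · intro t _ ht
    have : t.val + 1 ≠ j := fun h => ht (Fin.ext (by simp; omega))
    simp [this]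
  · simp

lemma eps_mul_self (n : ℕ) : eps n * eps n = 1 := by
  rw [eps, ← mul_pow, neg_one_mul, neg_neg, one_pow]

lemma eps_eq_one_or_neg_one (n : ℕ) : eps n = 1 ∨ eps n = -1 :=
  neg_one_pow_eq_or ℤ (n - 1)

lemma matUnit_mul_aMat {i j : ℕ} (hj : 1 ≤ j) (hjn : j < n) :
    matUnit n i j * aMat n = matUnit n i (j + 1) := by
  rw [aMat, mul_add, Finset.mul_sum, mul_smul_comm, matUnit_mul_matUnit_of_ne (by omega),
    smul_zero, add_zero, Finset.sum_eq_single_of_mem (j - 1) (Finset.mem_range.2 (by omega))]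
  · rw [show j - 1 + 1 = j by omega, show j - 1 + 2 = j + 1 by omega,
      matUnit_mul_matUnit hj hjn.le]
  · intro m _ hm
    exact matUnit_mul_matUnit_of_ne (by omega)

lemma matUnit_last_mul_aMat {i : ℕ} (hn : 1 ≤ n) :
    matUnit n i n * aMat n = eps n • matUnit n i 1 := by
  rw [aMat, mul_add, Finset.mul_sum, mul_smul_comm, matUnit_mul_matUnit hn le_rfl,
    Finset.sum_eq_zero fun m hm => matUnit_mul_matUnit_of_ne (by simp at hm; omega), zero_add]

lemma aMat_mul_matUnit {i j : ℕ} (hi : 1 ≤ i) (hin : i < n) :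
    aMat n * matUnit n (i + 1) j = matUnit n i j := by
  rw [aMat, add_mul, Finset.sum_mul, smul_mul_assoc, matUnit_mul_matUnit_of_ne (by omega),
    smul_zero, add_zero, Finset.sum_eq_single_of_mem (i - 1) (Finset.mem_range.2 (by omega))]
  · rw [show i - 1 + 1 = i by omega, show i - 1 + 2 = i + 1 by omega,
      matUnit_mul_matUnit (by omega) (by omega)]
  · intro m _ hm
    exact matUnit_mul_matUnit_of_ne (by omega)

lemma aMat_mul_matUnit_one {j : ℕ} (hn : 1 ≤ n) :
    aMat n * matUnit n 1 j = eps n • matUnit n n j := by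
  rw [aMat, add_mul, Finset.sum_mul, smul_mul_assoc, matUnit_mul_matUnit le_rfl hn,
    Finset.sum_eq_zero fun m _ => matUnit_mul_matUnit_of_ne (by omega), zero_add]

def transvecMat (n i j : ℕ) (c : ℤ) : Matrix (Fin n) (Fin n) ℤ :=
  1 + c • matUnit n i j

lemma transvecMat_mul_aMat (c : ℤ) {i j : ℕ} (hi : 1 ≤ i) (hin : i < n) (hj : 1 ≤ j)
    (hjn : j < n) :
    transvecMat n i j c * aMat n = aMat n * transvecMat n (i + 1) (j + 1) c := by
  rw [transvecMat, transvecMat, add_mul, mul_add, one_mul, mul_one, smul_mul_assoc,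
    mul_smul_comm, matUnit_mul_aMat hj hjn, aMat_mul_matUnit hi hin]

lemma transvecMat_last_mul_aMat (c : ℤ) {j : ℕ} (hj : 1 ≤ j) (hjn : j < n) :
    transvecMat n n j c * aMat n = aMat n * transvecMat n 1 (j + 1) (eps n * c) := by
  rw [transvecMat, transvecMat, add_mul, mul_add, one_mul, mul_one, smul_mul_assoc,
    mul_smul_comm, matUnit_mul_aMat hj hjn, aMat_mul_matUnit_one (by omega), smul_smul,
    mul_right_comm, eps_mul_self, one_mul]

lemma one_add_mul_one_sub_of_mul_self_eq_zero {R : Type*} [Ring R] {x : R} (hx : x * x = 0) :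
    (1 + x) * (1 - x) = 1 := by
  rw [mul_sub, mul_one, add_mul, one_mul, hx, add_zero, add_sub_cancel_right]

lemma commutator_one_add_of_mul_eq_zero {R : Type*} [Ring R] {x y : R} (hxx : x * x = 0)
    (hyy : y * y = 0) (hyx : y * x = 0) :
    (1 + x) * (1 + y) * (1 - x) * (1 - y) = 1 + x * y := by
  have h₁ : (1 + x) * (1 + y) * (1 - x) = 1 + y + x * y - x * x - (1 + x) * (y * x) := by
    noncomm_ring
  have h₂ : (1 + y + x * y) * (1 - y) = 1 + x * y - (1 + x) * (y * y) := by
    noncomm_ring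
  rw [h₁, hxx, hyx, mul_zero, sub_zero, sub_zero, h₂, hyy, mul_zero, sub_zero]

lemma transvecMat_mul_transvecMat_neg (c : ℤ) {i j : ℕ} (hij : i ≠ j) :
    transvecMat n i j c * transvecMat n i j (-c) = 1 := by
  rw [transvecMat, transvecMat, neg_smul, ← sub_eq_add_neg]
  refine one_add_mul_one_sub_of_mul_self_eq_zero ?_
  rw [smul_mul_smul, matUnit_mul_matUnit_of_ne hij.symm, smul_zero]

lemma transvecMat_commutator (c d : ℤ) {i j k : ℕ} (hk : 1 ≤ k) (hkn : k ≤ n)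
    (hik : i ≠ k) (hkj : k ≠ j) (hij : i ≠ j) :
    transvecMat n i k c * transvecMat n k j d * transvecMat n i k (-c) *
      transvecMat n k j (-d) = transvecMat n i j (c * d) := by
  simp only [transvecMat, neg_smul, ← sub_eq_add_neg]
  rw [commutator_one_add_of_mul_eq_zero, smul_mul_smul, matUnit_mul_matUnit hk hkn] <;>
    rw [smul_mul_smul, matUnit_mul_matUnit_of_ne (by omega), smul_zero]

namespace Matrix.SpecialLinearGroup

variable {A g h : SpecialLinearGroup (Fin n) ℤ}

lemma coe_inv_eq_of_mul_eq_one {M : Matrix (Fin n) (Fin n) ℤ}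
    (hM : (g : Matrix (Fin n) (Fin n) ℤ) * M = 1) :
    ((g⁻¹ : SpecialLinearGroup (Fin n) ℤ) : Matrix (Fin n) (Fin n) ℤ) = M := by
  calc ((g⁻¹ : SpecialLinearGroup (Fin n) ℤ) : Matrix (Fin n) (Fin n) ℤ)
      = ↑g⁻¹ * (↑g * M) := by rw [hM, mul_one]
    _ = M := by rw [← mul_assoc, ← coe_mul, inv_mul_cancel, coe_one, one_mul]

lemma coe_conj_eq_of_mul_eq {N : Matrix (Fin n) (Fin n) ℤ}
    (hN : (g : Matrix (Fin n) (Fin n) ℤ) * A = A * N) :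
    ((A⁻¹ * g * A : SpecialLinearGroup (Fin n) ℤ) : Matrix (Fin n) (Fin n) ℤ) = N := by
  rw [coe_mul, coe_mul, mul_assoc, hN, ← mul_assoc, ← coe_mul, inv_mul_cancel, coe_one, one_mul]

lemma coe_inv_of_coe_eq_transvecMat {i j : ℕ} {c : ℤ} (hij : i ≠ j)
    (hg : (g : Matrix (Fin n) (Fin n) ℤ) = transvecMat n i j c) :
    ((g⁻¹ : SpecialLinearGroup (Fin n) ℤ) : Matrix (Fin n) (Fin n) ℤ) =
      transvecMat n i j (-c) :=
  coe_inv_eq_of_mul_eq_one (hg ▸ transvecMat_mul_transvecMat_neg c hij)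

lemma coe_commutatorElement_of_coe_eq_transvecMat {i j k : ℕ} {c d : ℤ} (hk : 1 ≤ k)
    (hkn : k ≤ n) (hik : i ≠ k) (hkj : k ≠ j) (hij : i ≠ j)
    (hg : (g : Matrix (Fin n) (Fin n) ℤ) = transvecMat n i k c)
    (hh : (h : Matrix (Fin n) (Fin n) ℤ) = transvecMat n k j d) :
    ((⁅g, h⁆ : SpecialLinearGroup (Fin n) ℤ) : Matrix (Fin n) (Fin n) ℤ) =
      transvecMat n i j (c * d) := by
  rw [commutatorElement_def, coe_mul, coe_mul, coe_mul, coe_inv_of_coe_eq_transvecMat hik hg,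
    coe_inv_of_coe_eq_transvecMat hkj hh, hg, hh,
    transvecMat_commutator c d hk hkn hik hkj hij]

lemma coe_conj_aMat_pow_of_coe_eq_transvecMat (hA : (A : Matrix (Fin n) (Fin n) ℤ) = aMat n)
    {i j : ℕ} {c : ℤ} (hi : 1 ≤ i) (hj : 1 ≤ j) (k : ℕ) (hik : i + k ≤ n) (hjk : j + k ≤ n)
    (hg : (g : Matrix (Fin n) (Fin n) ℤ) = transvecMat n i j c) :
    (((A ^ k)⁻¹ * g * A ^ k : SpecialLinearGroup (Fin n) ℤ) : Matrix (Fin n) (Fin n) ℤ) =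
      transvecMat n (i + k) (j + k) c := by
  induction k with
  | zero => simpa using hg
  | succ k ih =>
    have hconj : (A ^ (k + 1))⁻¹ * g * A ^ (k + 1) =
        A⁻¹ * ((A ^ k)⁻¹ * g * A ^ k) * A := by
      group
    rw [hconj, ← add_assoc, ← add_assoc]
    refine coe_conj_eq_of_mul_eq ?_
    rw [ih (by omega) (by omega), hA]
    exact transvecMat_mul_aMat c (by omega) (by omega) (by omega) (by omega)

lemma coe_conj_aMat_of_coe_eq_transvecMat_last (hA : (A : Matrix (Fin n) (Fin n) ℤ) = aMat n)
    {j : ℕ} {c : ℤ} (hj : 1 ≤ j) (hjn : j < n)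
    (hg : (g : Matrix (Fin n) (Fin n) ℤ) = transvecMat n n j c) :
    ((A⁻¹ * g * A : SpecialLinearGroup (Fin n) ℤ) : Matrix (Fin n) (Fin n) ℤ) =
      transvecMat n 1 (j + 1) (eps n * c) :=
  coe_conj_eq_of_mul_eq (hg ▸ hA ▸ transvecMat_last_mul_aMat c hj hjn)

end Matrix.SpecialLinearGroup

namespace FreeGroup

variable {α : Type*} [DecidableEq α]

lemma norm_commutatorElement_le (v w : FreeGroup α) :
    ⁅v, w⁆.norm ≤ 2 * v.norm + 2 * w.norm := by
  have h₁ := norm_mul_le (v * w * v⁻¹) w⁻¹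
  have h₂ := norm_mul_le (v * w) v⁻¹
  have h₃ := norm_mul_le v w
  rw [norm_inv_eq] at h₁ h₂
  rw [commutatorElement_def]
  omega

def shiftWord (k : ℕ) (w : FreeGroup (Fin 2)) : FreeGroup (Fin 2) :=
  (of 0 ^ k)⁻¹ * w * of 0 ^ k

lemma norm_shiftWord_le (k : ℕ) (w : FreeGroup (Fin 2)) :
    (shiftWord k w).norm ≤ w.norm + 2 * k := by
  have h₁ := norm_mul_le ((of (0 : Fin 2) ^ k)⁻¹ * w) (of 0 ^ k)
  have h₂ := norm_mul_le (of (0 : Fin 2) ^ k)⁻¹ w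
  rw [norm_inv_eq, norm_of_pow] at h₂
  rw [norm_of_pow] at h₁
  rw [shiftWord]
  omega

lemma lift_shiftWord {G : Type*} [Group G] (f : Fin 2 → G) (k : ℕ) (w : FreeGroup (Fin 2)) :
    lift f (shiftWord k w) = (f 0 ^ k)⁻¹ * lift f w * f 0 ^ k := by
  simp [shiftWord]

/-- A word for `T_{d+1,1}`: the commutator of `T_{d+1,e+1}` and `T_{e+1,1}` with `e = ⌊d/2⌋`,
where `T_{d+1,e+1}` is `T_{d-e+1,1}` shifted by `e`. -/
def lowerWord (d : ℕ) : FreeGroup (Fin 2) :=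
  if d ≤ 1 then of 1
  else ⁅shiftWord (d / 2) (lowerWord (d - d / 2)), lowerWord (d / 2)⁆
termination_by d
decreasing_by all_goals omega

lemma norm_lowerWord_add_le {d : ℕ} (hd : 1 ≤ d) :
    (lowerWord d).norm + 3 * d ≤ 4 * d ^ 2 := by
  induction d using Nat.strong_induction_on with
  | _ d ih =>
    rw [lowerWord]
    split_ifs with hd₁
    · rw [norm_of]
      obtain rfl : d = 1 := by omega
      norm_num
    · obtain ⟨m, e, rfl, he⟩ : ∃ m e, d = 2 * m + e ∧ e ≤ 1 :=
        ⟨d / 2, d % 2, by omega, by omega⟩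
      rw [show (2 * m + e) / 2 = m by omega, show 2 * m + e - m = m + e by omega]
      have h₁ := ih (m + e) (by omega) (by omega)
      have h₂ := ih m (by omega) (by omega)
      have h₃ := norm_commutatorElement_le (shiftWord m (lowerWord (m + e))) (lowerWord m)
      have h₄ := norm_shiftWord_le m (lowerWord (m + e))
      have he₂ : e * e ≤ e := mul_le_of_le_one_left e.zero_le he
      nlinarith

end FreeGroup

section Evaluation

variable {f : Fin 2 → SpecialLinearGroup (Fin n) ℤ}

lemma coe_lift_lowerWord (hA : (f 0 : Matrix (Fin n) (Fin n) ℤ) = aMat n)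
    (hB : (f 1 : Matrix (Fin n) (Fin n) ℤ) = bMat n) {d : ℕ} (hd : 1 ≤ d) (hdn : d < n) :
    (lift f (lowerWord d) : Matrix (Fin n) (Fin n) ℤ) = transvecMat n (d + 1) 1 1 := by
  induction d using Nat.strong_induction_on with
  | _ d ih =>
    rw [lowerWord]
    split_ifs with hd₁
    · obtain rfl : d = 1 := by omega
      rw [lift_apply_of, hB, bMat, transvecMat, one_smul]
    · have hlower := ih (d - d / 2) (by omega) (by omega) (by omega)
      have hupper := coe_conj_aMat_pow_of_coe_eq_transvecMat hA (i := d - d / 2 + 1) (j := 1)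
        (by omega) le_rfl (d / 2) (by omega) (by omega) hlower
      rw [show d - d / 2 + 1 + d / 2 = d + 1 by omega, add_comm 1] at hupper
      have hcomm := coe_commutatorElement_of_coe_eq_transvecMat (by omega) (by omega) (by omega)
        (by omega) (by omega) hupper (ih (d / 2) (by omega) (by omega) (by omega))
      rwa [mul_one, ← lift_shiftWord, ← map_commutatorElement] at hcomm

lemma coe_lift_shiftWord_lowerWord_of_lt (hA : (f 0 : Matrix (Fin n) (Fin n) ℤ) = aMat n)
    (hB : (f 1 : Matrix (Fin n) (Fin n) ℤ) = bMat n) {i j : ℕ} (hj : 1 ≤ j) (hji : j < i)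
    (hin : i ≤ n) :
    (lift f (shiftWord (j - 1) (lowerWord (i - j))) : Matrix (Fin n) (Fin n) ℤ) =
      transvecMat n i j 1 := by
  rw [lift_shiftWord]
  convert coe_conj_aMat_pow_of_coe_eq_transvecMat hA (by omega) le_rfl (j - 1) (by omega)
    (by omega) (coe_lift_lowerWord hA hB (d := i - j) (by omega) (by omega)) using 2 <;> omega

/-- Shifting `T_{d+1,1}` by `j - 1` with `d = n + i - j` wraps the row index past `n` once,
which costs the sign `ε_n`. -/
lemma coe_lift_shiftWord_lowerWord_of_gt (hA : (f 0 : Matrix (Fin n) (Fin n) ℤ) = aMat n)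
    (hB : (f 1 : Matrix (Fin n) (Fin n) ℤ) = bMat n) {i j : ℕ} (hi : 1 ≤ i) (hij : i < j)
    (hjn : j ≤ n) :
    (lift f (shiftWord (j - 1) (lowerWord (n + i - j))) : Matrix (Fin n) (Fin n) ℤ) =
      transvecMat n i j (eps n) := by
  set d := n + i - j
  set g := lift f (lowerWord d)
  have hsplit : (f 0 ^ (j - 1))⁻¹ * g * f 0 ^ (j - 1) = (f 0 ^ (i - 1))⁻¹ *
      ((f 0)⁻¹ * ((f 0 ^ (j - i - 1))⁻¹ * g * f 0 ^ (j - i - 1)) * f 0) * f 0 ^ (i - 1) := by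
    rw [show j - 1 = j - i - 1 + 1 + (i - 1) by omega]
    group
  have hlast := coe_conj_aMat_pow_of_coe_eq_transvecMat hA (by omega) le_rfl (j - i - 1)
    (by omega) (by omega) (coe_lift_lowerWord hA hB (d := d) (by omega) (by omega))
  rw [show d + 1 + (j - i - 1) = n by omega, add_comm 1] at hlast
  have hwrap := coe_conj_aMat_of_coe_eq_transvecMat_last hA (by omega) (by omega) hlast
  rw [mul_one] at hwrap
  rw [lift_shiftWord, hsplit]
  convert coe_conj_aMat_pow_of_coe_eq_transvecMat hA le_rfl (by omega) (i - 1) (by omega)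
    (by omega) hwrap using 2 <;> omega

end Evaluation

lemma exists_word_coe_lift_eq_Tmat {f : Fin 2 → SpecialLinearGroup (Fin n) ℤ}
    (hA : (f 0 : Matrix (Fin n) (Fin n) ℤ) = aMat n)
    (hB : (f 1 : Matrix (Fin n) (Fin n) ℤ) = bMat n) {i j : ℕ} (hi : 1 ≤ i) (hin : i ≤ n)
    (hj : 1 ≤ j) (hjn : j ≤ n) (hij : i ≠ j) :
    ∃ w : FreeGroup (Fin 2), (lift f w : Matrix (Fin n) (Fin n) ℤ) = Tmat n i j ∧
      w.norm ≤ 4 * n ^ 2 := by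
  obtain ⟨d, c, hd, hdn, hc, hw⟩ : ∃ d c, 1 ≤ d ∧ d < n ∧ (c = 1 ∨ c = -1) ∧
      (lift f (shiftWord (j - 1) (lowerWord d)) : Matrix (Fin n) (Fin n) ℤ) =
        transvecMat n i j c := by
    rcases lt_or_gt_of_ne hij with hlt | hgt
    · exact ⟨n + i - j, eps n, by omega, by omega, eps_eq_one_or_neg_one n,
        coe_lift_shiftWord_lowerWord_of_gt hA hB hi hlt hjn⟩
    · exact ⟨i - j, 1, by omega, by omega, Or.inl rfl,
        coe_lift_shiftWord_lowerWord_of_lt hA hB hj hgt hin⟩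
  have hnorm : (shiftWord (j - 1) (lowerWord d)).norm ≤ 4 * n ^ 2 := by
    have h₁ := norm_shiftWord_le (j - 1) (lowerWord d)
    have h₂ := norm_lowerWord_add_le hd
    have h₃ : j - 1 < n := by omega
    nlinarith
  rcases hc with rfl | rfl
  · exact ⟨_, by rw [hw, Tmat, transvecMat, one_smul], hnorm⟩
  · refine ⟨(shiftWord (j - 1) (lowerWord d))⁻¹, ?_, by rwa [norm_inv_eq]⟩
    rw [_root_.map_inv, coe_inv_of_coe_eq_transvecMat hij hw, neg_neg, Tmat, transvecMat, one_smul]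

/-- There is an absolute constant `C > 0` such that for every `n ≥ 3` and
all distinct 1-based indices `i, j ∈ {1, …, n}`, there is a word `w` in the free group
on two generators whose evaluation at `(a_n, b_n)` equals `T_{i,j}` and whose freely
reduced length is at most `C · n²`. -/
theorem transvection_words_quadratic :
    ∃ C : ℝ, 0 < C ∧
      ∀ n : ℕ, 3 ≤ n →
        ∀ A B : Matrix.SpecialLinearGroup (Fin n) ℤ,
          (A : Matrix (Fin n) (Fin n) ℤ) = aMat n →
          (B : Matrix (Fin n) (Fin n) ℤ) = bMat n →
          ∀ i j : ℕ, 1 ≤ i → i ≤ n → 1 ≤ j → j ≤ n → i ≠ j →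
            ∃ w : FreeGroup (Fin 2),
              ((FreeGroup.lift (fun t : Fin 2 => if t = 0 then A else B) w :
                  Matrix.SpecialLinearGroup (Fin n) ℤ) :
                  Matrix (Fin n) (Fin n) ℤ) = Tmat n i j ∧
              (w.toWord.length : ℝ) ≤ C * (n : ℝ) ^ 2 := by
  refine ⟨4, by norm_num, fun n _ A B hA hB i j hi hin hj hjn hij => ?_⟩
  obtain ⟨w, hw, hnorm⟩ := exists_word_coe_lift_eq_Tmat (f := fun t => if t = 0 then A else B)
    hA hB hi hin hj hjn hij
  exact ⟨w, hw, by exact_mod_cast hnorm⟩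
end

section
/- For every n ≥ 3, the element x_n := a_n · b_n has infinite order in SL_n(ℤ): x_n^m = I_n only when m = 0. -/
/-! If `x = a_n b_n` had finite order, every complex eigenvalue `μ` of `x` would lie on the unit
circle. But `x^{n-1} (x - 1) = ε_n`, so also `|μ - 1| = |μ^{n-1} (μ - 1)| = 1`, which forces
`Re μ = 1/2`. The trace of `x` is `1`, while the real part of the sum of its `n` eigenvalues would
be `n/2`; this is impossible for `n ≥ 3`.

The identity is checked row by row: the first unit row vector `e₀` is cyclic for `x`, with
`e_{j+1} = e₀ (x - 1) x^j`, and it is an eigen-row of `x^{n-1} (x - 1)` for `ε_n`. -/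

open Matrix

section

open Polynomial

theorem spectrum.eval_eq_zero_of_aeval_eq_zero {𝕜 A : Type*} [Field 𝕜] [Ring A] [Algebra 𝕜 A]
    {a : A} {p : 𝕜[X]} (hp : aeval a p = 0) {μ : 𝕜} (hμ : μ ∈ spectrum 𝕜 a) :
    p.eval μ = 0 := by
  cases subsingleton_or_nontrivial A
  · simp [spectrum.of_subsingleton] at hμ
  · simpa [hp, spectrum.zero_eq] using spectrum.subset_polynomial_aeval a p ⟨μ, hμ, rfl⟩

theorem Complex.re_eq_half_of_norm_eq_one_of_norm_sub_one_eq_one {z : ℂ} (h : ‖z‖ = 1)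
    (h' : ‖z - 1‖ = 1) : z.re = 1 / 2 := by
  have e : ‖z‖ ^ 2 = ‖z - 1‖ ^ 2 := by rw [h, h']
  simp only [Complex.sq_norm, Complex.normSq_apply, Complex.sub_re, Complex.sub_im,
    Complex.one_re, Complex.one_im] at e
  linarith

theorem spectrum.re_eq_half_of_isOfFinOrder {A : Type*} [Ring A] [Algebra ℂ A] {a : A}
    (ha : IsOfFinOrder a) {ε : ℂ} (hε : ‖ε‖ = 1) {m : ℕ}
    (h : a ^ m * (a - 1) = algebraMap ℂ A ε) {μ : ℂ} (hμ : μ ∈ spectrum ℂ a) :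
    μ.re = 1 / 2 := by
  obtain ⟨k, hk, hak⟩ := ha.exists_pow_eq_one
  have hμk : μ ^ k = 1 := by
    have := eval_eq_zero_of_aeval_eq_zero (p := X ^ k - 1) (by simp [hak]) hμ
    simpa [sub_eq_zero] using this
  have hμm : μ ^ m * (μ - 1) = ε := by
    have := eval_eq_zero_of_aeval_eq_zero (p := X ^ m * (X - 1) - C ε) (by simp [h]) hμ
    simpa [sub_eq_zero] using this
  have hnorm : ‖μ‖ = 1 := Complex.norm_eq_one_of_pow_eq_one hμk hk.ne'
  refine Complex.re_eq_half_of_norm_eq_one_of_norm_sub_one_eq_one hnorm ?_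
  simpa [hnorm, hε] using congrArg norm hμm

theorem Matrix.re_trace_eq_half_card {ι : Type*} [Fintype ι] [DecidableEq ι]
    {M : Matrix ι ι ℂ} (hM : IsOfFinOrder M) {ε : ℂ} (hε : ‖ε‖ = 1) {m : ℕ}
    (h : M ^ m * (M - 1) = algebraMap ℂ _ ε) : M.trace.re = Fintype.card ι / 2 := by
  have hre : M.charpoly.roots.map Complex.re = Multiset.replicate (Fintype.card ι) (1 / 2) := by
    rw [Multiset.eq_replicate, Multiset.card_map, ← M.charpoly_natDegree_eq_dim,
      ← (IsAlgClosed.splits M.charpoly).natDegree_eq_card_roots]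
    simp only [Multiset.mem_map, forall_exists_index, and_imp, forall_apply_eq_imp_iff₂]
    refine ⟨trivial, fun μ hμ => spectrum.re_eq_half_of_isOfFinOrder hM hε h ?_⟩
    exact M.mem_spectrum_iff_isRoot_charpoly.2 (mem_roots'.1 hμ).2
  rw [M.trace_eq_sum_roots_charpoly, ← Complex.coe_reAddGroupHom, map_multiset_sum,
    Complex.coe_reAddGroupHom, hre]
  simp [div_eq_mul_inv]

end

theorem Matrix.vecMul_vecMul_of_commute {ι R : Type*} [Fintype ι] [CommRing R] {v : ι → R}
    {P Q : Matrix ι ι R} {c : R} (hv : v ᵥ* P = c • v) (hPQ : Commute Q P) :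
    (v ᵥ* Q) ᵥ* P = c • (v ᵥ* Q) := by
  rw [vecMul_vecMul, hPQ.eq, ← vecMul_vecMul, hv, smul_vecMul]

theorem aMat_apply (n : ℕ) (r s : Fin n) :
    aMat n r s = (if (s : ℕ) = r + 1 then 1 else 0) +
      (if (r : ℕ) + 1 = n ∧ (s : ℕ) = 0 then eps n else 0) := by
  simp only [aMat, Matrix.add_apply, Matrix.sum_apply, Matrix.smul_apply, matUnit, of_apply,
    smul_eq_mul, mul_ite, mul_one, mul_zero]
  congr 1
  · rw [Finset.sum_eq_single (r : ℕ)]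
    · grind
    · intro b _ hb; simp only [ite_eq_right_iff]; omega
    · intro h; simp only [Finset.mem_range] at h; simp only [ite_eq_right_iff]; omega
  · grind

theorem bMat_apply (n : ℕ) (r s : Fin n) :
    bMat n r s = (if r = s then 1 else 0) + (if (r : ℕ) = 1 ∧ (s : ℕ) = 0 then 1 else 0) := by
  simp only [bMat, Matrix.add_apply, one_apply, matUnit, of_apply]
  grind

def xMat (n : ℕ) : Matrix (Fin n) (Fin n) ℤ := aMat n * bMat n

theorem xMat_apply {n : ℕ} (hn : 2 ≤ n) (r s : Fin n) :
    xMat n r s = (if (s : ℕ) = r + 1 then 1 else 0) + (if (r : ℕ) = 0 ∧ (s : ℕ) = 0 then 1 else 0)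
      + (if (r : ℕ) + 1 = n ∧ (s : ℕ) = 0 then eps n else 0) := by
  simp only [xMat, mul_apply, bMat_apply, mul_add, mul_ite, mul_one, mul_zero,
    Finset.sum_add_distrib, Finset.sum_ite_eq', Finset.mem_univ, if_true]
  rw [Finset.sum_eq_single (⟨1, hn⟩ : Fin n)]
  · simp only [aMat_apply]; grind
  · intro b _ hb; simp only [ite_eq_right_iff]; intro h; exact absurd (Fin.ext h.1) hb
  · simp

theorem trace_xMat {n : ℕ} (hn : 2 ≤ n) : (xMat n).trace = 1 := by
  have hdiag : ∀ i : Fin n, xMat n i i = if (i : ℕ) = 0 then 1 else 0 := by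
    intro i; rw [xMat_apply hn]; grind
  simp only [trace, diag, hdiag]
  rw [Finset.sum_eq_single (⟨0, by omega⟩ : Fin n)] <;> grind

theorem single_zero_vecMul_xMat {n : ℕ} (hn : 2 ≤ n) :
    Pi.single ⟨0, by omega⟩ 1 ᵥ* xMat n = Pi.single ⟨0, by omega⟩ 1 + Pi.single ⟨1, hn⟩ 1 := by
  ext s
  simp only [single_one_vecMul, row, xMat_apply hn, Pi.add_apply, Pi.single_apply, Fin.ext_iff]
  grind

theorem single_succ_vecMul_xMat {n i : ℕ} (hi : i + 2 < n) :
    Pi.single ⟨i + 1, by omega⟩ 1 ᵥ* xMat n = Pi.single ⟨i + 2, hi⟩ 1 := by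
  ext s
  simp only [single_one_vecMul, row, xMat_apply (by omega : 2 ≤ n), Pi.single_apply, Fin.ext_iff]
  grind

theorem single_last_vecMul_xMat {n : ℕ} (hn : 2 ≤ n) :
    Pi.single ⟨n - 1, by omega⟩ 1 ᵥ* xMat n = eps n • Pi.single ⟨0, by omega⟩ 1 := by
  ext s
  simp only [single_one_vecMul, row, xMat_apply hn, Pi.smul_apply, Pi.single_apply, Fin.ext_iff,
    smul_eq_mul, mul_ite, mul_one, mul_zero]
  grind

theorem single_one_vecMul_xMat_pow {n k : ℕ} (hk : k + 1 < n) :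
    Pi.single ⟨1, by omega⟩ 1 ᵥ* xMat n ^ k = Pi.single ⟨k + 1, hk⟩ 1 := by
  induction k with
  | zero => simp
  | succ k ih => rw [pow_succ, ← vecMul_vecMul, ih (by omega), single_succ_vecMul_xMat]

theorem single_one_vecMul_xMat_pow_pred {n : ℕ} (hn : 2 ≤ n) :
    Pi.single ⟨1, hn⟩ 1 ᵥ* xMat n ^ (n - 1) = eps n • Pi.single ⟨0, by omega⟩ 1 := by
  obtain ⟨m, rfl⟩ : ∃ m, n = m + 2 := ⟨n - 2, by omega⟩
  rw [show m + 2 - 1 = m + 1 from rfl, pow_succ, ← vecMul_vecMul,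
    single_one_vecMul_xMat_pow (by omega)]
  exact single_last_vecMul_xMat hn

theorem xMat_pow_pred_mul_sub_one {n : ℕ} (hn : 2 ≤ n) :
    xMat n ^ (n - 1) * (xMat n - 1) = eps n • 1 := by
  set x := xMat n
  have hx : Commute (x - 1) x := (Commute.refl x).sub_left (Commute.one_left x)
  have hsub : Pi.single ⟨0, by omega⟩ 1 ᵥ* (x - 1) = Pi.single ⟨1, hn⟩ 1 := by
    rw [vecMul_sub, single_zero_vecMul_xMat hn, vecMul_one, add_sub_cancel_left]
  have h0 : Pi.single ⟨0, by omega⟩ 1 ᵥ* (x ^ (n - 1) * (x - 1)) =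
      eps n • Pi.single ⟨0, by omega⟩ 1 := by
    rw [← (hx.pow_right _).eq, ← vecMul_vecMul, hsub, single_one_vecMul_xMat_pow_pred hn]
  have hrow : ∀ i, Pi.single i 1 ᵥ* (x ^ (n - 1) * (x - 1)) = eps n • Pi.single i 1 := by
    rintro ⟨_ | j, hj⟩
    · exact h0
    · have hcomm : Commute ((x - 1) * x ^ j) (x ^ (n - 1) * (x - 1)) :=
        ((hx.pow_right _).mul_right (Commute.refl _)).mul_left
          ((Commute.pow_pow_self x j _).mul_right (hx.pow_right j).symm)
      have hj' : Pi.single ⟨0, by omega⟩ 1 ᵥ* ((x - 1) * x ^ j) = Pi.single ⟨j + 1, hj⟩ 1 := by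
        rw [← vecMul_vecMul, hsub, single_one_vecMul_xMat_pow]
      simpa only [hj'] using vecMul_vecMul_of_commute h0 hcomm
  ext i j
  simpa [Pi.single_apply, one_apply, eq_comm] using congrFun (hrow i) j

/-- For every `n ≥ 3`, the element `x_n = a_n · b_n` has infinite order in
`SL_n(ℤ)`: `x_n^m = I_n` only when `m = 0`. -/
theorem aMat_mul_bMat_infinite_order (n : ℕ) (hn : 3 ≤ n)
    (X : Matrix.SpecialLinearGroup (Fin n) ℤ)
    (hX : (X : Matrix (Fin n) (Fin n) ℤ) = aMat n * bMat n) :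
    (∀ m : ℤ, X ^ m = 1 → m = 0) ∧ ¬ IsOfFinOrder X := by
  have hfin : ¬ IsOfFinOrder X := by
    intro hXfin
    let φ := (Int.castRingHom ℂ).mapMatrix (m := Fin n)
    have hM : IsOfFinOrder (φ (xMat n)) := by
      simpa [hX, xMat] using
        (φ.toMonoidHom.comp SpecialLinearGroup.coeMonoidHom).isOfFinOrder hXfin
    have hid : φ (xMat n) ^ (n - 1) * (φ (xMat n) - 1) = algebraMap ℂ _ (eps n) := by
      simpa [Algebra.algebraMap_eq_smul_one] using
        congrArg φ (xMat_pow_pred_mul_sub_one (by omega))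
    have htr := Matrix.re_trace_eq_half_card hM (by simp [eps]) hid
    rw [RingHom.mapMatrix_apply, ← AddMonoidHom.map_trace, trace_xMat (by omega)] at htr
    simp only [eq_intCast, Int.cast_one, Complex.one_re, Fintype.card_fin] at htr
    have h2 : (n : ℝ) = 2 := by linarith
    have : n = 2 := by exact_mod_cast h2
    omega
  exact ⟨fun m hm => by_contra fun h => hfin (isOfFinOrder_iff_zpow_eq_one.2 ⟨m, h, hm⟩), hfin⟩
end
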